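/- Fix $s_1,s_2,s_3,s_4 > 0$ and define $\beta(\phi) = \|(s_1 e^{i\phi}, s_2, s_3, s_4)\|_{\mathsf{X}}$. Then $\beta$ is strictly decreasing on $[0,\pi]$. -/

import Mathlib

open Complex Real

noncomputable def Xfun (z : Fin 4 → ℂ) (σ : ℝ) : ℝ :=
  ‖z 0 * Complex.exp (σ * Complex.I) + (starRingEnd ℂ) (z 3)‖ +
  ‖z 1 * Complex.exp (σ * Complex.I) + (starRingEnd ℂ) (z 2)‖

noncomputable def Xnorm (z : Fin 4 → ℂ) : ℝ := ⨆ σ : ℝ, Xfun z σ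

noncomputable def phase (z : Fin 4 → ℂ) : ℝ :=
  (Complex.arg (z 0) + Complex.arg (z 3)) - (Complex.arg (z 1) + Complex.arg (z 2))

/-!
Both summands of `Xfun` are of the form `‖p e^{iθ} + q‖ = √(p² + q² + 2pq cos θ)`, a strictly
decreasing function of the angular distance `arccos (cos θ) ∈ [0, π]` of `θ` from `2πℤ`.
Let `σ₀` maximise the sum at `φ`, and let `a`, `c` be the angular distances of `φ + σ₀` and `σ₀`;
by the triangle inequality for angular distance, `φ ≤ a + c`. For `φ' < φ` we can shrink `a`
and `c` to `a' ≤ a`, `c' ≤ c` with `a' + c' = φ'`, at least one strictly, and `σ = -c'` realises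
the pair `(a', c')` at `φ'`; so the maximum at `φ'` is strictly larger.
-/

open Set

lemma norm_ofReal_mul_exp_add_ofReal (r t θ : ℝ) :
    ‖(r : ℂ) * exp (θ * I) + t‖ = √(r ^ 2 + t ^ 2 + 2 * r * t * Real.cos θ) := by
  have hre : ((r : ℂ) * exp (θ * I) + t).re = r * Real.cos θ + t := by
    simp [exp_ofReal_mul_I_re]
  have him : ((r : ℂ) * exp (θ * I) + t).im = r * Real.sin θ := by
    simp [exp_ofReal_mul_I_im]
  rw [norm_def, normSq_apply, hre, him]
  congr 1
  linear_combination r ^ 2 * Real.sin_sq_add_cos_sq θ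

lemma strictMonoOn_sqrt_sq_add_sq_add_mul {p q : ℝ} (hp : 0 < p) (hq : 0 < q) :
    StrictMonoOn (fun t => √(p ^ 2 + q ^ 2 + 2 * p * q * t)) (Icc (-1) 1) := by
  intro t₁ ht₁ t₂ _ h
  apply Real.sqrt_lt_sqrt
  · nlinarith [sq_nonneg (p - q), mul_pos hp hq, ht₁.1]
  · nlinarith [mul_pos hp hq]

lemma sin_arccos_cos (x : ℝ) : Real.sin (arccos (Real.cos x)) = |Real.sin x| := by
  rw [sin_arccos, abs_sin_eq_sqrt_one_sub_cos_sq]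

/-- `arccos (cos x)` is the distance from `x` to `2πℤ`, hence subadditive. -/
lemma arccos_cos_add_le (x y : ℝ) :
    arccos (Real.cos (x + y)) ≤ arccos (Real.cos x) + arccos (Real.cos y) := by
  set a := arccos (Real.cos x)
  set b := arccos (Real.cos y)
  rcases le_or_gt π (a + b) with h | h
  · exact (arccos_le_pi _).trans h
  have hcos : Real.cos (a + b) ≤ Real.cos (x + y) := by
    rw [Real.cos_add, Real.cos_add, cos_arccos (neg_one_le_cos x) (cos_le_one x),
      cos_arccos (neg_one_le_cos y) (cos_le_one y), sin_arccos_cos, sin_arccos_cos, ← abs_mul]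
    linarith [le_abs_self (Real.sin x * Real.sin y)]
  calc arccos (Real.cos (x + y)) ≤ arccos (Real.cos (a + b)) := antitone_arccos hcos
    _ = a + b := arccos_cos (add_nonneg (arccos_nonneg _) (arccos_nonneg _)) h.le

lemma exists_add_eq_and_add_lt_add {F G : ℝ → ℝ} {b a c φ : ℝ}
    (hF : StrictAntiOn F (Icc 0 b)) (hG : StrictAntiOn G (Icc 0 b))
    (ha : a ∈ Icc 0 b) (hc : c ∈ Icc 0 b) (hφ : 0 ≤ φ) (hlt : φ < a + c) :
    ∃ a' c', a' + c' = φ ∧ F a + G c < F a' + G c' := by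
  rcases le_or_gt a φ with haφ | hφa
  · refine ⟨a, φ - a, by ring, ?_⟩
    have : G c < G (φ - a) :=
      hG ⟨by linarith, by linarith [hc.2]⟩ hc (by linarith)
    linarith
  · refine ⟨φ, 0, by ring, ?_⟩
    have hFa : F a < F φ := hF ⟨hφ, by linarith [ha.2]⟩ ha hφa
    have hGc : G c ≤ G 0 := hG.antitoneOn ⟨le_rfl, hc.1.trans hc.2⟩ hc hc.1
    linarith

lemma exists_eq_iSup_of_periodic {u : ℝ → ℝ} {T : ℝ} (hu : Function.Periodic u T) (hT : T ≠ 0)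
    (hc : Continuous u) : BddAbove (range u) ∧ ∃ σ₀, u σ₀ = ⨆ σ, u σ :=
  have hK := hu.compact_of_continuous hT hc
  ⟨hK.bddAbove, hK.sSup_mem (range_nonempty u)⟩

theorem strictAntiOn_iSup_comp_cos_add {f g : ℝ → ℝ} (hfc : Continuous f) (hgc : Continuous g)
    (hf : StrictMonoOn f (Icc (-1) 1)) (hg : StrictMonoOn g (Icc (-1) 1)) :
    StrictAntiOn (fun φ => ⨆ σ, f (Real.cos (φ + σ)) + g (Real.cos σ)) (Icc 0 π) := by
  intro φ' hφ' φ hφ hlt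
  set S : ℝ → ℝ → ℝ := fun ψ σ => f (Real.cos (ψ + σ)) + g (Real.cos σ)
  have hS (ψ : ℝ) : BddAbove (range (S ψ)) ∧ ∃ σ₀, S ψ σ₀ = ⨆ σ, S ψ σ := by
    refine exists_eq_iSup_of_periodic (T := 2 * π) (fun σ => ?_) (by positivity) (by fun_prop)
    simp only [S, ← add_assoc, Real.cos_add_two_pi]
  obtain ⟨σ₀, hσ₀⟩ := (hS φ).2
  have hmaps : MapsTo Real.cos (Icc 0 π) (Icc (-1) 1) :=
    fun x _ => ⟨neg_one_le_cos x, cos_le_one x⟩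
  have hdist (x : ℝ) : arccos (Real.cos x) ∈ Icc 0 π := ⟨arccos_nonneg _, arccos_le_pi _⟩
  have hsum : φ ≤ arccos (Real.cos (φ + σ₀)) + arccos (Real.cos σ₀) := by
    simpa [arccos_cos hφ.1 hφ.2] using arccos_cos_add_le (φ + σ₀) (-σ₀)
  obtain ⟨a', c', hac', hgt⟩ := exists_add_eq_and_add_lt_add
    (hf.comp_strictAntiOn strictAntiOn_cos hmaps) (hg.comp_strictAntiOn strictAntiOn_cos hmaps)
    (hdist _) (hdist _) hφ'.1 (hlt.trans_le hsum)
  simp only [Function.comp_apply, cos_arccos (neg_one_le_cos _) (cos_le_one _)] at hgt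
  calc ⨆ σ, S φ σ = S φ σ₀ := hσ₀.symm
    _ < S φ' (-c') := by simpa [S, ← hac'] using hgt
    _ ≤ ⨆ σ, S φ' σ := le_ciSup (hS φ').1 _

lemma Xfun_rotate (s₁ s₂ s₃ s₄ φ σ : ℝ) :
    Xfun ![(s₁ : ℂ) * exp (φ * I), (s₂ : ℂ), (s₃ : ℂ), (s₄ : ℂ)] σ =
      √(s₁ ^ 2 + s₄ ^ 2 + 2 * s₁ * s₄ * Real.cos (φ + σ)) +
        √(s₂ ^ 2 + s₃ ^ 2 + 2 * s₂ * s₃ * Real.cos σ) := by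
  have hrot : (s₁ : ℂ) * exp (φ * I) * exp (σ * I) = s₁ * exp ((φ + σ : ℝ) * I) := by
    rw [mul_assoc, ← Complex.exp_add]
    push_cast
    ring_nf
  simp only [Xfun, Matrix.cons_val_zero, Matrix.cons_val_one, Matrix.cons_val_two,
    Matrix.cons_val_three, Matrix.tail_cons, Matrix.head_cons, hrot, conj_ofReal,
    norm_ofReal_mul_exp_add_ofReal]

theorem stmt_13 (s₁ s₂ s₃ s₄ : ℝ) (h₁ : 0 < s₁) (h₂ : 0 < s₂) (h₃ : 0 < s₃) (h₄ : 0 < s₄) :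
    StrictAntiOn
      (fun φ : ℝ => Xnorm ![(s₁ : ℂ) * Complex.exp (φ * Complex.I), (s₂ : ℂ), (s₃ : ℂ), (s₄ : ℂ)])
      (Set.Icc 0 Real.pi) := by
  simp only [Xnorm, Xfun_rotate]
  exact strictAntiOn_iSup_comp_cos_add (by fun_prop) (by fun_prop)
    (strictMonoOn_sqrt_sq_add_sq_add_mul h₁ h₄) (strictMonoOn_sqrt_sq_add_sq_add_mul h₂ h₃)
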